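/- Let κ : [0,T] → ℝ be continuous with 0 < κ_min ≤ κ(t) ≤ κ_max, and let φ ≥ 0, and terminal value X(T) = -φ' + b/2 ≤ 0 with φ' ≥ b/2. Then the Riccati ODE X'(t) = φ - X(t)²/κ(t), X(T) = -φ' + b/2, has a unique solution on [0,T], and this solution satisfies X(t) ≤ 0 and X(t) ≥ -max(φ' - b/2, √(φ κ_max)) for all t ∈ [0,T] (in particular X is bounded). -/

import Mathlib

/-!
Let `M = max (φ' - b/2) √(φ κ_max)`, so that `M² ≥ φ κ`. Replacing `X` by its clamp to `[-M, 0]`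
in the nonlinearity gives a bounded, globally Lipschitz field, so Picard–Lindelöf produces a
solution on a whole neighbourhood of `[0, T]` in one step. Above `0` the clamped field equals
`φ ≥ 0` and below `-M` it equals `φ - M² / κ ≤ 0`, so read backward from `T` the solution cannot
leave `[-M, 0]`, where the clamp is inactive. Uniqueness holds because the field is Lipschitz on
bounded sets and any two solutions are bounded on the compact interval.
-/

open Set Metric
open scoped NNReal

theorem exists_forall_mem_Icc_hasDerivWithinAt_of_norm_le {E : Type*} [NormedAddCommGroup E]
    [NormedSpace ℝ E] [CompleteSpace E] {f : ℝ → E → E} {tmin tmax : ℝ}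
    (t₀ : Icc tmin tmax) (x₀ : E) {K L : ℝ≥0}
    (hlip : ∀ t ∈ Icc tmin tmax, LipschitzWith K (f t))
    (hcont : ∀ x, ContinuousOn (f · x) (Icc tmin tmax))
    (hnorm : ∀ t ∈ Icc tmin tmax, ∀ x, ‖f t x‖ ≤ L) :
    ∃ α : ℝ → E, α t₀ = x₀ ∧
      ∀ t ∈ Icc tmin tmax, HasDerivWithinAt α (f t (α t)) (Icc tmin tmax) t := by
  set a : ℝ≥0 := L * Real.toNNReal (max (tmax - t₀) (t₀ - tmin))
  have hPL : IsPicardLindelof f t₀ x₀ a 0 L K :=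
    { lipschitzOnWith := fun t ht => (hlip t ht).lipschitzOnWith
      continuousOn := fun x _ => hcont x
      norm_le := fun t ht x _ => hnorm t ht x
      mul_max_le := by
        simp only [a, NNReal.coe_zero, sub_zero, NNReal.coe_mul]
        gcongr
        exact Real.le_coe_toNNReal _ }
  exact hPL.exists_eq_forall_mem_Icc_hasDerivWithinAt₀

theorem le_of_hasDerivWithinAt_nonneg_above {f f' : ℝ → ℝ} {a b c : ℝ}
    (hf : ∀ t ∈ Icc a b, HasDerivWithinAt f (f' t) (Icc a b) t)
    (hf' : ∀ t ∈ Icc a b, c < f t → 0 ≤ f' t) (hb : f b ≤ c) :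
    ∀ t ∈ Icc a b, f t ≤ c := by
  intro t₀ ht₀
  by_contra! hc
  have hcont : ContinuousOn f (Icc a b) := HasDerivWithinAt.continuousOn hf
  have hsub : Icc t₀ b ⊆ Icc a b := Icc_subset_Icc_left ht₀.1
  have hS : IsCompact (Icc t₀ b ∩ f ⁻¹' Iic c) :=
    isCompact_Icc.of_isClosed_subset
      ((hcont.mono hsub).preimage_isClosed_of_isClosed isClosed_Icc isClosed_Iic)
      inter_subset_left
  -- `τ` is the first time after `t₀` with `f τ ≤ c`; before it `f` is increasing.
  obtain ⟨τ, ⟨hτ, hfτ⟩, hτ_least⟩ := hS.exists_isLeast ⟨b, ⟨ht₀.2, le_rfl⟩, hb⟩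
  have hsub' : Icc t₀ τ ⊆ Icc a b := (Icc_subset_Icc_right hτ.2).trans hsub
  have hmono : MonotoneOn f (Icc t₀ τ) := by
    refine monotoneOn_of_hasDerivWithinAt_nonneg (f' := f') (convex_Icc _ _) (hcont.mono hsub')
      ?_ ?_ <;> rw [interior_Icc] <;> intro t ht
    · exact (hf t (hsub' (Ioo_subset_Icc_self ht))).mono (Ioo_subset_Icc_self.trans hsub')
    · refine hf' t (hsub' (Ioo_subset_Icc_self ht)) (lt_of_not_ge fun hle => ?_)
      exact ht.2.not_ge (hτ_least ⟨⟨ht.1.le, ht.2.le.trans hτ.2⟩, hle⟩)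
  have := hmono ⟨le_rfl, hτ.1⟩ ⟨hτ.1, le_rfl⟩ hτ.1
  exact (hc.trans_le this).not_ge hfτ

theorem le_of_hasDerivWithinAt_nonpos_below {f f' : ℝ → ℝ} {a b c : ℝ}
    (hf : ∀ t ∈ Icc a b, HasDerivWithinAt f (f' t) (Icc a b) t)
    (hf' : ∀ t ∈ Icc a b, f t < c → f' t ≤ 0) (hb : c ≤ f b) :
    ∀ t ∈ Icc a b, c ≤ f t := by
  intro t ht
  have := le_of_hasDerivWithinAt_nonneg_above (f := -f) (f' := -f') (c := -c)
    (fun t ht => (hf t ht).neg) (fun t ht h => neg_nonneg.2 (hf' t ht (neg_lt_neg_iff.1 h)))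
    (neg_le_neg hb) t ht
  exact neg_le_neg_iff.1 this

noncomputable def riccatiField (φ : ℝ) (κ : ℝ → ℝ) (t x : ℝ) : ℝ := φ - x ^ 2 / κ t

theorem lipschitzOnWith_riccatiField {φ κmin t R : ℝ} {κ : ℝ → ℝ} (hκ0 : 0 < κmin)
    (hκ : κmin ≤ κ t) :
    LipschitzOnWith (Real.toNNReal (2 * R / κmin)) (riccatiField φ κ t) (closedBall 0 R) := by
  refine LipschitzOnWith.of_dist_le_mul fun x hx y hy => ?_
  rw [mem_closedBall_zero_iff, Real.norm_eq_abs] at hx hy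
  have hκt : 0 < κ t := hκ0.trans_le hκ
  have hR : 0 ≤ R := (abs_nonneg x).trans hx
  rw [Real.coe_toNNReal _ (by positivity), Real.dist_eq, Real.dist_eq]
  calc |riccatiField φ κ t x - riccatiField φ κ t y| = |x + y| * |x - y| / κ t := by
        rw [show riccatiField φ κ t x - riccatiField φ κ t y = -((x + y) * (x - y) / κ t) by
          unfold riccatiField; ring, abs_neg, abs_div, abs_mul, abs_of_pos hκt]
    _ ≤ 2 * R * |x - y| / κmin := by
        gcongr
        calc |x + y| ≤ |x| + |y| := abs_add_le x y
          _ ≤ 2 * R := by linarith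
    _ = 2 * R / κmin * |x - y| := by ring

theorem eqOn_of_hasDerivAt_riccatiField {φ κmin a b : ℝ} {κ : ℝ → ℝ}
    (hκmin : ∀ t ∈ Icc a b, κmin ≤ κ t) (hκ0 : 0 < κmin) {X Y : ℝ → ℝ}
    (hX : ∀ t ∈ Icc a b, HasDerivAt X (riccatiField φ κ t (X t)) t)
    (hY : ∀ t ∈ Icc a b, HasDerivAt Y (riccatiField φ κ t (Y t)) t) (hb : X b = Y b) :
    EqOn X Y (Icc a b) := by
  have hXc := HasDerivAt.continuousOn hX
  have hYc := HasDerivAt.continuousOn hY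
  obtain ⟨C, hC⟩ := isCompact_Icc.exists_bound_of_continuousOn (hXc.prodMk hYc)
  have hmem : ∀ t ∈ Icc a b, X t ∈ closedBall 0 C ∧ Y t ∈ closedBall 0 C := fun t ht =>
    ⟨mem_closedBall_zero_iff.2 ((norm_fst_le _).trans (hC t ht)),
      mem_closedBall_zero_iff.2 ((norm_snd_le _).trans (hC t ht))⟩
  exact ODE_solution_unique_of_mem_Icc_left (s := fun _ => closedBall 0 C)
    (fun t ht => lipschitzOnWith_riccatiField hκ0 (hκmin t (Ioc_subset_Icc_self ht))) hXc
    (fun t ht => (hX t (Ioc_subset_Icc_self ht)).hasDerivWithinAt)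
    (fun t ht => (hmem t (Ioc_subset_Icc_self ht)).1) hYc
    (fun t ht => (hY t (Ioc_subset_Icc_self ht)).hasDerivWithinAt)
    (fun t ht => (hmem t (Ioc_subset_Icc_self ht)).2) hb

theorem abs_max_neg_min_zero_le {M : ℝ} (hM : 0 ≤ M) (y : ℝ) : |max (-M) (min y 0)| ≤ M :=
  abs_le.2 ⟨le_max_left _ _, max_le (by linarith) ((min_le_right _ _).trans hM)⟩

noncomputable def clampedRiccatiField (φ M : ℝ) (κ : ℝ → ℝ) (t x : ℝ) : ℝ :=
  riccatiField φ κ t (max (-M) (min x 0))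

theorem lipschitzWith_clampedRiccatiField {φ κmin M t : ℝ} {κ : ℝ → ℝ} (hκ0 : 0 < κmin)
    (hκ : κmin ≤ κ t) (hM : 0 ≤ M) :
    LipschitzWith (Real.toNNReal (2 * M / κmin)) (clampedRiccatiField φ M κ t) := by
  rw [← lipschitzOnWith_univ, ← mul_one (Real.toNNReal _)]
  exact (lipschitzOnWith_riccatiField hκ0 hκ).comp
    ((LipschitzWith.id.min_const 0).const_max (-M)).lipschitzOnWith
    fun y _ => mem_closedBall_zero_iff.2 (abs_max_neg_min_zero_le hM y)

theorem abs_clampedRiccatiField_le {φ κmin M t x : ℝ} {κ : ℝ → ℝ} (hκ0 : 0 < κmin)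
    (hκ : κmin ≤ κ t) (hφ : 0 ≤ φ) (hM : 0 ≤ M) :
    |clampedRiccatiField φ M κ t x| ≤ φ + M ^ 2 / κmin := by
  have hc := abs_le.1 (abs_max_neg_min_zero_le hM x)
  calc |clampedRiccatiField φ M κ t x| ≤ |φ| + |max (-M) (min x 0) ^ 2 / κ t| := abs_sub _ _
    _ ≤ φ + M ^ 2 / κmin := by
      rw [abs_of_nonneg hφ, abs_of_nonneg (div_nonneg (sq_nonneg _) (hκ0.trans_le hκ).le)]
      exact add_le_add le_rfl (div_le_div₀ (sq_nonneg M) (sq_le_sq' hc.1 hc.2) hκ0 hκ)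

theorem exists_hasDerivAt_riccatiField_mem_Icc {φ κmin M a b x : ℝ} {κ : ℝ → ℝ} (hab : a ≤ b)
    (hκ : Continuous κ) (hκmin : ∀ t, κmin ≤ κ t) (hκ0 : 0 < κmin) (hφ : 0 ≤ φ)
    (hM : ∀ t, φ * κ t ≤ M ^ 2) (hx : x ∈ Icc (-M) 0) :
    ∃ X : ℝ → ℝ, X b = x ∧
      ∀ t ∈ Icc a b, HasDerivAt X (riccatiField φ κ t (X t)) t ∧ X t ∈ Icc (-M) 0 := by
  have hM0 : 0 ≤ M := by linarith [hx.1, hx.2]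
  have hκt : ∀ t, 0 < κ t := fun t => hκ0.trans_le (hκmin t)
  obtain ⟨X, hXb, hX⟩ := exists_forall_mem_Icc_hasDerivWithinAt_of_norm_le
    (f := clampedRiccatiField φ M κ) (tmin := a - 1) (tmax := b + 1)
    ⟨b, by constructor <;> linarith⟩ x (L := Real.toNNReal (φ + M ^ 2 / κmin))
    (fun t _ => lipschitzWith_clampedRiccatiField hκ0 (hκmin t) hM0)
    (fun y => (continuous_const.sub (continuous_const.div hκ fun t => (hκt t).ne')).continuousOn)
    (fun t _ y => (abs_clampedRiccatiField_le hκ0 (hκmin t) hφ hM0).trans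
      (Real.le_coe_toNNReal _))
  have hX' : ∀ t ∈ Icc a b, HasDerivAt X (clampedRiccatiField φ M κ t (X t)) t := fun t ht =>
    (hX t ⟨by linarith [ht.1], by linarith [ht.2]⟩).hasDerivAt
      (Icc_mem_nhds (by linarith [ht.1]) (by linarith [ht.2]))
  have hle : ∀ t ∈ Icc a b, X t ≤ 0 :=
    le_of_hasDerivWithinAt_nonneg_above (fun t ht => (hX' t ht).hasDerivWithinAt)
      (fun t _ hpos => by
        simp [clampedRiccatiField, riccatiField, min_eq_right hpos.le, hM0, hφ])
      (hXb ▸ hx.2)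
  have hge : ∀ t ∈ Icc a b, -M ≤ X t :=
    le_of_hasDerivWithinAt_nonpos_below (fun t ht => (hX' t ht).hasDerivWithinAt)
      (fun t _ hneg => by
        simp only [clampedRiccatiField, riccatiField,
          min_eq_left (hneg.le.trans (neg_nonpos.2 hM0)), max_eq_left hneg.le, neg_sq,
          sub_nonpos, le_div_iff₀ (hκt t)]
        exact hM t)
      (hXb ▸ hx.1)
  refine ⟨X, hXb, fun t ht => ⟨?_, hge t ht, hle t ht⟩⟩
  simpa [clampedRiccatiField, hle t ht, hge t ht] using hX' t ht

/-- Global existence, uniqueness and bounds for the backward Riccati equation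
`X' = φ - X²/κ(t)`, `X T = -φ' + b/2`, with `0 < κ_min ≤ κ ≤ κ_max`, `φ ≥ 0`, `φ' ≥ b/2`. -/
theorem riccati_existence_uniqueness_bounds
    (T φ φ' b κmin κmax : ℝ) (hT : 0 < T)
    (κ : ℝ → ℝ) (hκ : ContinuousOn κ (Icc 0 T))
    (hκmin : ∀ t ∈ Icc 0 T, κmin ≤ κ t) (hκmax : ∀ t ∈ Icc 0 T, κ t ≤ κmax)
    (hκ0 : 0 < κmin) (hφ : 0 ≤ φ) (hφ' : b / 2 ≤ φ') :
    ∃ X : ℝ → ℝ,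
      ((∀ t ∈ Icc 0 T, HasDerivAt X (φ - (X t) ^ 2 / κ t) t) ∧ X T = -φ' + b / 2) ∧
      (∀ t ∈ Icc 0 T,
        X t ≤ 0 ∧ -max (φ' - b / 2) (Real.sqrt (φ * κmax)) ≤ X t) ∧
      (∀ Y : ℝ → ℝ,
        (∀ t ∈ Icc 0 T, HasDerivAt Y (φ - (Y t) ^ 2 / κ t) t) → Y T = -φ' + b / 2 →
        EqOn X Y (Icc 0 T)) := by
  set M := max (φ' - b / 2) (Real.sqrt (φ * κmax))
  have hTmem : T ∈ Icc 0 T := ⟨hT.le, le_rfl⟩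
  have hκmax0 : 0 ≤ κmax := hκ0.le.trans ((hκmin T hTmem).trans (hκmax T hTmem))
  have hφM : φ * κmax ≤ M ^ 2 :=
    calc φ * κmax = Real.sqrt (φ * κmax) ^ 2 := (Real.sq_sqrt (mul_nonneg hφ hκmax0)).symm
      _ ≤ M ^ 2 := pow_le_pow_left₀ (Real.sqrt_nonneg _) (le_max_right _ _) 2
  -- `κ` is extended constantly beyond `[0, T]`, since `HasDerivAt` at the endpoints needs `X`
  -- to solve the equation on both sides of them.
  let p : ℝ → Icc 0 T := projIcc 0 T hT.le
  obtain ⟨X, hXT, hX⟩ := exists_hasDerivAt_riccatiField_mem_Icc (a := 0) (x := -φ' + b / 2) hT.le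
    (hκ.comp_continuous (continuous_subtype_val.comp continuous_projIcc) fun t => (p t).2)
    (fun t => hκmin _ (p t).2) hκ0 hφ
    (fun t => (mul_le_mul_of_nonneg_left (hκmax _ (p t).2) hφ).trans hφM)
    ⟨by linarith [le_max_left (φ' - b / 2) (Real.sqrt (φ * κmax))], by linarith⟩
  have hXsol : ∀ t ∈ Icc 0 T, HasDerivAt X (riccatiField φ κ t (X t)) t := fun t ht => by
    simpa only [riccatiField, Function.comp_apply, p, projIcc_of_mem _ ht] using (hX t ht).1
  refine ⟨X, ⟨hXsol, hXT⟩, fun t ht => ⟨(hX t ht).2.2, (hX t ht).2.1⟩, fun Y hY hYT => ?_⟩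
  exact eqOn_of_hasDerivAt_riccatiField hκmin hκ0 hXsol hY (hXT.trans hYT.symm)
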